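/- arXiv:1003.4421 — 6 statements merged into one kernel-verified Lean document; each statement's English description precedes it below -/
import Mathlib

section
/- Let q be an odd prime power and T a generator of the character group of F_q^*. Then for every integer k, G_{-k} · G_{-(q-1)/2 - k} = G_{-2k} · T^k(4) · G_{(q-1)/2}, where G_m denotes the Gauss sum of T^m. -/
open Finset

/-- The canonical additive character `θ(α) = e^{2πi·tr(α)/p}` of `F = F_q`, `q = p^e`. -/
noncomputable def theta (p : ℕ) (F : Type) [Field F] [Fintype F] [Algebra (ZMod p) F]
    (α : F) : ℂ :=
  Complex.exp (2 * Real.pi * Complex.I * ((Algebra.trace (ZMod p) F α).val : ℂ) / p)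

/-- The Gauss sum `G_m = ∑_{x ∈ F_q} T^m(x) θ(x)` (recall `T^m (0) = 0` for `T^m` nontrivial,
and characters are extended by `χ(0) = 0`). -/
noncomputable def gaussT (p : ℕ) (F : Type) [Field F] [Fintype F] [Algebra (ZMod p) F]
    (T : MulChar F ℂ) (m : ℤ) : ℂ :=
  ∑ x : F, (T ^ m) x * theta p F x

/-- The normalized Jacobi sum `binom(A,B) = (B(-1)/q) · J(A, B̄)`. -/
noncomputable def binomC (F : Type) [Field F] [Fintype F] (A B : MulChar F ℂ) : ℂ :=
  B (-1) / (Fintype.card F : ℂ) * jacobiSum A B⁻¹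

/-- Greene's Gaussian hypergeometric series `₂F₁(A,B;C|x)_q`, the sum over all
multiplicative characters `χ = T^m` of `F_q^*`, written via a generator `T` of the
character group. -/
noncomputable def hypF21 (F : Type) [Field F] [Fintype F] (T : MulChar F ℂ)
    (A B C : MulChar F ℂ) (x : F) : ℂ :=
  (Fintype.card F : ℂ) / ((Fintype.card F : ℂ) - 1) *
    ∑ m ∈ Finset.range (Fintype.card F - 1),
      binomC F (A * T ^ m) (T ^ m) * binomC F (B * T ^ m) (C * T ^ m) * (T ^ m) x

/-!
Write `φ` for the quadratic character and `g` for Gauss sums. The relation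
`g(χ) g(χφ) = χ(4)⁻¹ g(χ²) g(φ)` comes from the Jacobi-sum factorisations
`g(χ)² = g(χ²) J(χ,χ)` and `g(χ) g(φ) = g(χφ) J(χ,φ)` together with
`J(χ,χ) = χ(4)⁻¹ J(χ,φ)`, which follows by completing the square in `x (1 - x)` and counting
square roots with `φ`; since `J(χ,φ) ≠ 0`, it can be cancelled. The characters with `χ² = 1`
are `1` and `φ` only, where the relation is immediate. For a generator `T` of the cyclic group of
characters, `T ^ ((q - 1) / 2) = φ`, and the theorem is the relation for `χ = T ^ (-k)`.
-/

theorem MulChar.inv_apply_four_eq_one_of_sq_eq_one {F R : Type*} [Field F] [CommMonoidWithZero R]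
    (hF : ringChar F ≠ 2) {χ : MulChar F R} (hχ : χ ^ 2 = 1) : χ⁻¹ 4 = 1 := by
  have h2 : IsUnit (2 : F) := (Ring.two_ne_zero hF).isUnit
  rw [show (4 : F) = 2 ^ 2 by norm_num, map_pow, ← MulChar.pow_apply' _ two_ne_zero, inv_pow, hχ,
    inv_one, MulChar.one_apply h2]

namespace FiniteField

variable {F : Type} [Field F] [Fintype F]

instance : IsCyclic (MulChar F ℂ) :=
  (MulChar.mulEquiv_units F ℂ).some.isCyclic.mpr inferInstance

theorem jacobiSum_ne_zero {F' : Type} [Field F'] [CharZero F'] {χ ψ : MulChar F F'}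
    (hχ : χ ≠ 1) (hψ : ψ ≠ 1) (hχψ : χ * ψ ≠ 1) : jacobiSum χ ψ ≠ 0 := by
  have hchar : ringChar F' ≠ ringChar F := by
    rw [ringChar.eq_zero]
    exact (CharP.ringChar_ne_zero_of_finite F).symm
  intro h0
  have := jacobiSum_mul_jacobiSum_inv hchar hχ hψ hχψ
  rw [h0, zero_mul, eq_comm, Nat.cast_eq_zero] at this
  exact Fintype.card_ne_zero this

variable [DecidableEq F]

noncomputable def complexQuadraticChar (F : Type) [Field F] [Fintype F] [DecidableEq F] :
    MulChar F ℂ :=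
  (quadraticChar F).ringHomComp (Int.castRingHom ℂ)

local notation "φ" => complexQuadraticChar F

theorem complexQuadraticChar_ne_one (hF : ringChar F ≠ 2) : φ ≠ 1 :=
  (MulChar.ringHomComp_ne_one_iff (RingHom.injective_int _)).mpr (quadraticChar_ne_one hF)

theorem complexQuadraticChar_sq : φ ^ 2 = 1 :=
  ((quadraticChar_isQuadratic F).comp _).sq_eq_one

theorem complexQuadraticChar_inv : φ⁻¹ = φ :=
  ((quadraticChar_isQuadratic F).comp _).inv

theorem eq_one_or_eq_complexQuadraticChar_of_sq_eq_one (hF : ringChar F ≠ 2)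
    {ξ : MulChar F ℂ} (hξ : ξ ^ 2 = 1) : ξ = 1 ∨ ξ = φ := by
  classical
  have := Fintype.ofFinite (MulChar F ℂ)
  by_contra! h
  have hsub : {1, φ, ξ} ⊆ ({χ | χ ^ 2 = 1} : Finset (MulChar F ℂ)) := by
    simp [Finset.insert_subset_iff, complexQuadraticChar_sq, hξ]
  have hcard := (Finset.card_le_card hsub).trans (IsCyclic.card_pow_eq_one_le two_pos)
  rw [Finset.card_insert_of_notMem (by simp [(complexQuadraticChar_ne_one hF).symm, Ne.symm h.1]),
    Finset.card_pair (fun e => h.2 e.symm)] at hcard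
  omega

theorem sum_comp_sq_eq (hF : ringChar F ≠ 2) (f : F → ℂ) :
    ∑ t : F, f (t ^ 2) = ∑ u : F, (φ u + 1) * f u := by
  calc ∑ t : F, f (t ^ 2)
      = ∑ u : F, ∑ t with t ^ 2 = u, f (t ^ 2) := (sum_fiberwise univ (· ^ 2) _).symm
    _ = ∑ u : F, (#{t : F | t ^ 2 = u} : ℂ) * f u := by
        refine sum_congr rfl fun u _ => ?_
        rw [sum_congr rfl fun t ht => by rw [(mem_filter.mp ht).2], sum_const, nsmul_eq_mul]
    _ = ∑ u : F, (φ u + 1) * f u := by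
        refine sum_congr rfl fun u _ => ?_
        have hcard := quadraticChar_card_sqrts hF u
        rw [Set.toFinset_ofPred] at hcard
        simp only [complexQuadraticChar, MulChar.ringHomComp_apply, eq_intCast]
        exact_mod_cast congrArg (fun n : ℤ => (n : ℂ) * f u) hcard

/-- Completing the square, `x (1 - x) = (1 - t ^ 2) / 4` with `t = 2 x - 1`. -/
theorem jacobiSum_self (hF : ringChar F ≠ 2) {χ : MulChar F ℂ} (hχ : χ ≠ 1) :
    jacobiSum χ χ = χ⁻¹ 4 * jacobiSum χ φ := by
  have h2 : (2 : F) ≠ 0 := Ring.two_ne_zero hF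
  have h4 : (4 : F) ≠ 0 := by simpa [show (4 : F) = 2 ^ 2 by norm_num] using h2
  have hsquare : jacobiSum χ χ = χ 4⁻¹ * ∑ t : F, χ (1 - t ^ 2) := by
    rw [jacobiSum, mul_sum,
      ← Equiv.sum_comp ((Equiv.addLeft 1).trans (Equiv.mulLeft₀ 2⁻¹ (inv_ne_zero h2)))]
    refine sum_congr rfl fun t _ => ?_
    simp only [Equiv.trans_apply, Equiv.coe_addLeft, Equiv.mulLeft₀_apply, ← map_mul]
    congr 1
    field_simp [h4]
    ring
  have hshift : ∑ u : F, χ (1 - u) = 0 := by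
    rw [← MulChar.sum_eq_zero_of_ne_one hχ, ← (Equiv.subLeft (1 : F)).sum_comp]
    simp only [Equiv.subLeft_apply, sub_sub_cancel]
  rw [hsquare, MulChar.inv_apply', sum_comp_sq_eq hF fun u => χ (1 - u)]
  simp only [add_mul, one_mul, sum_add_distrib, hshift, add_zero]
  rw [jacobiSum_comm, jacobiSum]

/-- The Davenport–Hasse product formula for `m = 2`. -/
theorem gaussSum_mul_gaussSum_mul_complexQuadraticChar (hF : ringChar F ≠ 2)
    (χ : MulChar F ℂ) (ψ : AddChar F ℂ) :
    gaussSum χ ψ * gaussSum (χ * φ) ψ = gaussSum (χ ^ 2) ψ * χ⁻¹ 4 * gaussSum φ ψ := by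
  by_cases hχ2 : χ ^ 2 = 1
  · rw [hχ2, MulChar.inv_apply_four_eq_one_of_sq_eq_one hF hχ2, mul_one]
    rcases eq_one_or_eq_complexQuadraticChar_of_sq_eq_one hF hχ2 with rfl | rfl
    · rw [one_mul]
    · rw [← sq, complexQuadraticChar_sq, mul_comm]
  have hχ : χ ≠ 1 := by rintro rfl; exact hχ2 (one_pow 2)
  have hχφ : χ * φ ≠ 1 := fun h => hχ2 <| by
    rw [eq_inv_of_mul_eq_one_left h, complexQuadraticChar_inv, complexQuadraticChar_sq]
  have hJ := jacobiSum_ne_zero hχ (complexQuadraticChar_ne_one hF) hχφ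
  have hχχ := jacobiSum_mul_nontrivial (sq χ ▸ hχ2) ψ
  have hχφ' := jacobiSum_mul_nontrivial hχφ ψ
  refine mul_right_cancel₀ hJ ?_
  rw [sq] at *
  linear_combination gaussSum χ ψ * hχφ' - gaussSum φ ψ * hχχ +
    gaussSum (χ * χ) ψ * gaussSum φ ψ * jacobiSum_self hF hχ

section Generator

variable {T : MulChar F ℂ} (hT : ∀ χ : MulChar F ℂ, ∃ n : ℕ, χ = T ^ n)
include hT

omit [DecidableEq F] in
theorem orderOf_eq_card_sub_one_of_forall_eq_pow : orderOf T = Fintype.card F - 1 := by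
  have hgen : ∀ χ, χ ∈ Subgroup.zpowers T := fun χ => by
    obtain ⟨n, rfl⟩ := hT χ
    exact Subgroup.npow_mem_zpowers T n
  rw [orderOf_eq_card_of_forall_mem_zpowers hgen,
    MulChar.card_eq_card_units_of_hasEnoughRootsOfUnity, Nat.card_units, Nat.card_eq_fintype_card]

theorem pow_card_sub_one_div_two_eq_complexQuadraticChar (hF : ringChar F ≠ 2) :
    T ^ ((Fintype.card F - 1) / 2) = φ := by
  have hord := orderOf_eq_card_sub_one_of_forall_eq_pow hT
  have hodd := odd_card_of_char_ne_two hF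
  have hcard := Fintype.one_lt_card (α := F)
  have hsq : (T ^ ((Fintype.card F - 1) / 2)) ^ 2 = 1 := by
    rw [← pow_mul, Nat.div_mul_cancel (by omega), ← hord, pow_orderOf_eq_one]
  have hne : T ^ ((Fintype.card F - 1) / 2) ≠ 1 :=
    pow_ne_one_of_lt_orderOf (by omega) (by omega)
  exact (eq_one_or_eq_complexQuadraticChar_of_sq_eq_one hF hsq).resolve_left hne

end Generator

end FiniteField

open FiniteField

theorem gaussT_eq_gaussSum (p : ℕ) [NeZero p] (F : Type) [Field F] [Fintype F]
    [Algebra (ZMod p) F] (T : MulChar F ℂ) (m : ℤ) :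
    gaussT p F T m = gaussSum (T ^ m)
      (ZMod.stdAddChar.compAddMonoidHom (Algebra.trace (ZMod p) F).toAddMonoidHom) := by
  refine sum_congr rfl fun x _ => congrArg _ ?_
  rw [AddChar.compAddMonoidHom_apply, ZMod.stdAddChar_apply, ZMod.toCircle_apply]
  simp [theta]

theorem stmt_3_general (p : ℕ) [Fact p.Prime] (hp : p ≠ 2)
    (F : Type) [Field F] [Fintype F] [Algebra (ZMod p) F]
    (T : MulChar F ℂ) (hT : ∀ χ : MulChar F ℂ, ∃ n : ℕ, χ = T ^ n)
    (k : ℤ) :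
    gaussT p F T (-k) * gaussT p F T (-(((Fintype.card F - 1) / 2 : ℕ) : ℤ) - k) =
      gaussT p F T (-(2 * k)) * (T ^ k) (4 : F) *
        gaussT p F T (((Fintype.card F - 1) / 2 : ℕ) : ℤ) := by
  classical
  have : CharP F p := charP_of_injective_algebraMap (algebraMap (ZMod p) F).injective p
  have hF : ringChar F ≠ 2 := ringChar.eq F p ▸ hp
  have hφ := pow_card_sub_one_div_two_eq_complexQuadraticChar hT hF
  set χ := T ^ (-k)
  have hχφ :
      T ^ (-(((Fintype.card F - 1) / 2 : ℕ) : ℤ) - k) = χ * complexQuadraticChar F := by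
    rw [sub_eq_add_neg, zpow_add, zpow_neg, zpow_natCast, hφ, complexQuadraticChar_inv, mul_comm]
  have hχsq : T ^ (-(2 * k)) = χ ^ 2 := by rw [← zpow_natCast, ← zpow_mul]; ring_nf
  have hχinv : T ^ k = χ⁻¹ := by rw [← zpow_neg, neg_neg]
  simp only [gaussT_eq_gaussSum, hχφ, hχsq, hχinv, zpow_natCast, hφ]
  exact gaussSum_mul_gaussSum_mul_complexQuadraticChar hF χ _

theorem stmt_3 (p e : ℕ) [Fact p.Prime] (hp : p ≠ 2) (he : 0 < e)
    (F : Type) [Field F] [Fintype F] [Algebra (ZMod p) F]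
    (hq : Fintype.card F = p ^ e)
    (T : MulChar F ℂ) (hT : ∀ χ : MulChar F ℂ, ∃ n : ℕ, χ = T ^ n)
    (k : ℤ) :
    gaussT p F T (-k) * gaussT p F T (-(((Fintype.card F - 1) / 2 : ℕ) : ℤ) - k) =
      gaussT p F T (-(2 * k)) * (T ^ k) (4 : F) *
        gaussT p F T (((Fintype.card F - 1) / 2 : ℕ) : ℤ) :=
  stmt_3_general p hp F T hT k
end

section
/- Let q be a prime power with q ≡ 1 (mod 12) and T a generator of the character group of F_q^*. Then binom(T^{(q-1)/3}, T^{(q-1)/4}) · binom(T^{2(q-1)/3}, T^{3(q-1)/4}) = T^{(q-1)/3}(-1) · T^{(q-1)/4}(-1) / (q · T^{(q-1)/12}(-1)), where binom(A,B) = (B(-1)/q) J(A,B̄) is the normalized Jacobi sum. -/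
open Finset

/-!
Put `u = T ^ ((q - 1) / 12)`, a character of order 12. The two factors are then
`binom(u⁴, u³)` and `binom(u⁻⁴, u⁻³)`, and the classical relation `J(χ, φ) J(χ⁻¹, φ⁻¹) = q`
(for `χ`, `φ`, `χφ` nontrivial) makes their product `1 / q`. Since `u (-1) = ±1`, the right-hand
side is `u (-1) ^ 6 / q = 1 / q` as well.
-/

theorem MulChar.apply_neg_one_sq {R R' : Type*} [CommRing R] [CommMonoidWithZero R']
    (χ : MulChar R R') : χ (-1) ^ 2 = 1 := by
  rw [sq, ← map_mul, neg_mul_neg, one_mul, map_one]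

theorem binomC_mul_binomC_inv {F : Type} [Field F] [Fintype F] {A B : MulChar F ℂ}
    (hA : A ≠ 1) (hB : B ≠ 1) (hAB : A ≠ B) :
    binomC F A B * binomC F A⁻¹ B⁻¹ = 1 / Fintype.card F := by
  have hchar : ringChar ℂ ≠ ringChar F := by
    rw [ringChar.eq_zero]
    exact (CharP.char_ne_zero_of_finite F (ringChar F)).symm
  have hJ := jacobiSum_mul_jacobiSum_inv hchar hA (inv_ne_one.mpr hB)
    (mul_inv_eq_one.not.mpr hAB)
  have hq : (Fintype.card F : ℂ) ≠ 0 := Nat.cast_ne_zero.mpr Fintype.card_ne_zero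
  have hB_inv : B⁻¹ (-1) = B (-1) := by
    rw [MulChar.inv_apply', inv_neg_one]
  unfold binomC
  rw [hB_inv]
  calc B (-1) / Fintype.card F * jacobiSum A B⁻¹ * (B (-1) / Fintype.card F * jacobiSum A⁻¹ B⁻¹⁻¹)
      = B (-1) ^ 2 * (jacobiSum A B⁻¹ * jacobiSum A⁻¹ B⁻¹⁻¹) / (Fintype.card F) ^ 2 := by ring
    _ = 1 / Fintype.card F := by
      rw [hJ, B.apply_neg_one_sq]; field_simp

theorem MulChar.orderOf_eq_card_sub_one {F : Type} [Field F] [Fintype F] {T : MulChar F ℂ}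
    (hT : ∀ χ : MulChar F ℂ, ∃ n : ℕ, χ = T ^ n) : orderOf T = Fintype.card F - 1 := by
  have : NeZero (Monoid.exponent Fˣ : ℂ) :=
    ⟨Nat.cast_ne_zero.mpr (Monoid.exponent_ne_zero_of_finite (G := Fˣ))⟩
  classical
  rw [orderOf_eq_card_of_forall_mem_zpowers fun χ => ?_,
    MulChar.card_eq_card_units_of_hasEnoughRootsOfUnity, Nat.card_eq_fintype_card,
    Fintype.card_units]
  obtain ⟨n, rfl⟩ := hT χ
  exact ⟨n, zpow_natCast T n⟩

theorem binomC_pow_four_pow_three_mul_binomC_pow_eight_pow_nine {F : Type} [Field F] [Fintype F]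
    {u : MulChar F ℂ} (hu : orderOf u = 12) :
    binomC F (u ^ 4) (u ^ 3) * binomC F (u ^ 8) (u ^ 9) =
      (u ^ 4) (-1) * (u ^ 3) (-1) / (Fintype.card F * u (-1)) := by
  have hpow : ∀ m : ℕ, u ^ m = 1 ↔ 12 ∣ m := fun m => by
    rw [← hu, orderOf_dvd_iff_pow_eq_one]
  have h8 : u ^ 8 = (u ^ 4)⁻¹ := eq_inv_of_mul_eq_one_left <| by
    rw [← pow_add]; exact (hpow 12).mpr dvd_rfl
  have h9 : u ^ 9 = (u ^ 3)⁻¹ := eq_inv_of_mul_eq_one_left <| by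
    rw [← pow_add]; exact (hpow 12).mpr dvd_rfl
  have h43 : u ^ 4 ≠ u ^ 3 := fun h => by
    have hu1 : u ^ 1 = 1 := by rw [pow_one]; exact mul_eq_left.mp ((pow_succ u 3).symm.trans h)
    exact absurd ((hpow 1).mp hu1) (by norm_num)
  rw [h8, h9, binomC_mul_binomC_inv (mt (hpow 4).mp (by norm_num)) (mt (hpow 3).mp (by norm_num))
    h43, MulChar.pow_apply' u (by norm_num), MulChar.pow_apply' u (by norm_num)]
  have hc := u.apply_neg_one_sq
  have hc0 : u (-1) ≠ 0 := fun h => by simp [h] at hc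
  have hq : (Fintype.card F : ℂ) ≠ 0 := Nat.cast_ne_zero.mpr Fintype.card_ne_zero
  field_simp
  linear_combination (-(u (-1)) ^ 4 - u (-1) ^ 2 - 1) * hc

theorem stmt_7_general
    (F : Type) [Field F] [Fintype F]
    (h12 : Fintype.card F % 12 = 1)
    (T : MulChar F ℂ) (hT : ∀ χ : MulChar F ℂ, ∃ n : ℕ, χ = T ^ n) :
    binomC F (T ^ ((Fintype.card F - 1) / 3)) (T ^ ((Fintype.card F - 1) / 4)) *
        binomC F (T ^ (2 * ((Fintype.card F - 1) / 3))) (T ^ (3 * ((Fintype.card F - 1) / 4))) =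
      (T ^ ((Fintype.card F - 1) / 3)) (-1 : F) * (T ^ ((Fintype.card F - 1) / 4)) (-1 : F) /
        ((Fintype.card F : ℂ) * (T ^ ((Fintype.card F - 1) / 12)) (-1 : F)) := by
  obtain ⟨k, hk⟩ : 12 ∣ Fintype.card F - 1 := Nat.dvd_of_mod_eq_zero (by omega)
  have hord : orderOf T = k * 12 := by rw [MulChar.orderOf_eq_card_sub_one hT, hk, mul_comm]
  have hu : orderOf (T ^ k) = 12 := by
    have hq : 2 ≤ Fintype.card F := Fintype.one_lt_card
    rw [orderOf_pow_of_dvd (by omega) (hord ▸ dvd_mul_right k 12), hord,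
      Nat.mul_div_cancel_left _ (by omega)]
  rw [hk, show 12 * k / 3 = k * 4 by omega, show 12 * k / 4 = k * 3 by omega,
    show 2 * (k * 4) = k * 8 by ring, show 3 * (k * 3) = k * 9 by ring,
    show 12 * k / 12 = k by omega, pow_mul, pow_mul, pow_mul, pow_mul]
  exact binomC_pow_four_pow_three_mul_binomC_pow_eight_pow_nine hu

theorem stmt_7 (p e : ℕ) [Fact p.Prime] (he : 0 < e)
    (F : Type) [Field F] [Fintype F]
    (hq : Fintype.card F = p ^ e) (h12 : Fintype.card F % 12 = 1)
    (T : MulChar F ℂ) (hT : ∀ χ : MulChar F ℂ, ∃ n : ℕ, χ = T ^ n) :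
    binomC F (T ^ ((Fintype.card F - 1) / 3)) (T ^ ((Fintype.card F - 1) / 4)) *
        binomC F (T ^ (2 * ((Fintype.card F - 1) / 3))) (T ^ (3 * ((Fintype.card F - 1) / 4))) =
      (T ^ ((Fintype.card F - 1) / 3)) (-1 : F) * (T ^ ((Fintype.card F - 1) / 4)) (-1 : F) /
        ((Fintype.card F : ℂ) * (T ^ ((Fintype.card F - 1) / 12)) (-1 : F)) :=
  stmt_7_general F h12 T hT
end

section
/- Let q be a prime power with q ≡ 1 (mod 4) and T a generator of the character group of F_q^*. Then T^{(q-1)/4}(-1) = T^{(q-1)/2}(2). -/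
/-!
A generator `T` of the character group sends `-1` to `-1`, because some character does not fix
`-1`; hence the left side is `(-1)^((q-1)/4)`. On the right, `T^((q-1)/2)(2) = T(2^((q-1)/2))`,
and by the second supplement to quadratic reciprocity `2^((q-1)/2) = χ₈(q) = (-1)^((q-1)/4)` in
`F_q` when `q ≡ 1 (mod 4)`.
-/

open Finset

open ZMod

theorem ZMod.χ₈_nat_eq_neg_one_pow_of_mod_four_eq_one {n : ℕ} (hn : n % 4 = 1) :
    χ₈ n = (-1) ^ (n / 4) := by
  rw [χ₈_nat_eq_if_mod_eight]
  rcases (by omega : n % 8 = 1 ∨ n % 8 = 5) with h8 | h8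
  · rw [if_neg (by omega), if_pos (by omega), Even.neg_one_pow ⟨n / 8, by omega⟩]
  · rw [if_neg (by omega), if_neg (by omega), Odd.neg_one_pow ⟨n / 8, by omega⟩]

theorem FiniteField.two_pow_card_div_two_of_card_mod_four {F : Type*} [Field F] [Fintype F]
    (hF : ringChar F ≠ 2) (h4 : Fintype.card F % 4 = 1) :
    (2 : F) ^ (Fintype.card F / 2) = (-1) ^ (Fintype.card F / 4) := by
  rw [FiniteField.two_pow_card hF, χ₈_nat_eq_neg_one_pow_of_mod_four_eq_one h4]
  push_cast
  rfl

theorem MulChar.apply_neg_one_of_forall_eq_pow {M R : Type*} [CommRing M] [Finite M]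
    [CommRing R] [IsDomain R] [HasEnoughRootsOfUnity R (Monoid.exponent Mˣ)]
    (hM : (-1 : M) ≠ 1) {T : MulChar M R} (hT : ∀ χ : MulChar M R, ∃ n : ℕ, χ = T ^ n) :
    T (-1) = -1 := by
  have hsq : T (-1) * T (-1) = 1 := by rw [← map_mul, neg_mul_neg, one_mul, map_one]
  refine (mul_self_eq_one_iff.mp hsq).resolve_left fun hT1 ↦ ?_
  obtain ⟨χ, hχ⟩ := MulChar.exists_apply_ne_one_of_hasEnoughRootsOfUnity M R hM
  obtain ⟨n, rfl⟩ := hT χ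
  apply hχ
  simpa [hT1] using MulChar.pow_apply_coe T n (-1)

theorem stmt_8_general
    (F : Type) [Field F] [Fintype F]
    (h4 : Fintype.card F % 4 = 1)
    (T : MulChar F ℂ) (hT : ∀ χ : MulChar F ℂ, ∃ n : ℕ, χ = T ^ n) :
    (T ^ ((Fintype.card F - 1) / 4)) (-1 : F) = (T ^ ((Fintype.card F - 1) / 2)) (2 : F) := by
  set q := Fintype.card F
  have hq : 1 < q := Fintype.one_lt_card
  have hchar : ringChar F ≠ 2 := mt FiniteField.even_card_iff_char_two.mp (by omega)
  have hT1 : T (-1) = -1 :=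
    MulChar.apply_neg_one_of_forall_eq_pow (Ring.neg_one_ne_one_of_char_ne_two hchar) hT
  have hT1pow (k : ℕ) : (T ^ k) (-1) = (-1) ^ k := by
    simpa [hT1] using MulChar.pow_apply_coe T k (-1)
  calc (T ^ ((q - 1) / 4)) (-1) = (-1) ^ (q / 4) := by
        rw [hT1pow, show (q - 1) / 4 = q / 4 by omega]
    _ = T ((2 : F) ^ (q / 2)) := by
      rw [FiniteField.two_pow_card_div_two_of_card_mod_four hchar h4, map_pow, hT1]
    _ = (T ^ ((q - 1) / 2)) 2 := by
      rw [map_pow, ← MulChar.pow_apply' T (show q / 2 ≠ 0 by omega),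
        show (q - 1) / 2 = q / 2 by omega]

theorem stmt_8 (p e : ℕ) [Fact p.Prime] (he : 0 < e)
    (F : Type) [Field F] [Fintype F]
    (hq : Fintype.card F = p ^ e) (h4 : Fintype.card F % 4 = 1)
    (T : MulChar F ℂ) (hT : ∀ χ : MulChar F ℂ, ∃ n : ℕ, χ = T ^ n) :
    (T ^ ((Fintype.card F - 1) / 4)) (-1 : F) = (T ^ ((Fintype.card F - 1) / 2)) (2 : F) :=
  stmt_8_general F h4 T hT
end

section
/- For multiplicative characters A, B, C of F_q and x ∈ F_q with x ≠ 0, 1, Greene's hypergeometric series satisfies ₂F₁(A,B;C|x)_q = A(-1) · ₂F₁(A,B; A·B·C̄ | 1−x)_q. -/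
open Finset

/-!
Expanding the two normalized Jacobi sums and summing over all characters by orthogonality
collapses `₂F₁(A,B;C|x)` to the one-variable sum
`C(-1)/q · ∑_t B(t) C̄(1-t) A((1-t)/(1-t+tx))`.
At `1 - x`, with `C` replaced by `ABC̄`, the summand simplifies to `B(y/(1-y)) C(1-y) Ā(1-xy)`,
and the substitution `t = y/(y-1)` carries the sum at `x` to `B(-1)` times the same expression.
-/

namespace MulChar

variable {F R : Type*} [Field F] [Field R]

theorem apply_neg_one_mul_apply_neg_one (χ : MulChar F R) : χ (-1) * χ (-1) = 1 := by
  rw [← map_mul, neg_one_mul, neg_neg, map_one]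

theorem inv_apply_neg_one (χ : MulChar F R) : χ⁻¹ (-1) = χ (-1) := by
  rw [inv_apply', inv_neg_one]

theorem sum_range_pow_apply [Fintype F] [DecidableEq F]
    [HasEnoughRootsOfUnity R (Monoid.exponent Fˣ)] {T : MulChar F R}
    (hT : ∀ χ : MulChar F R, ∃ n : ℕ, χ = T ^ n) (w : F) :
    ∑ m ∈ range (Fintype.card F - 1), (T ^ m) w =
      if w = 1 then (Fintype.card F : R) - 1 else 0 := by
  rcases eq_or_ne w 0 with rfl | hw0
  · simp
  have hpow (m : ℕ) : (T ^ m) w = T w ^ m := by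
    simpa using pow_apply_coe T m (Units.mk0 w hw0)
  simp_rw [hpow]
  split_ifs with hw1
  · simp [hw1, Nat.cast_sub Fintype.card_pos]
  have hTw : T w ≠ 1 := by
    obtain ⟨χ, hχ⟩ := exists_apply_ne_one_of_hasEnoughRootsOfUnity F R hw1
    obtain ⟨n, rfl⟩ := hT χ
    rw [hpow] at hχ
    exact fun h ↦ hχ (by rw [h, one_pow])
  rw [geom_sum_eq hTw, ← map_pow, FiniteField.pow_card_sub_one_eq_one w hw0, map_one, sub_self,
    zero_div]

theorem sum_ite_div_eq_one [Fintype F] [DecidableEq F] (A : MulChar F R) {t x : F} (ht : t ≠ 0)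
    (hx : x ≠ 0) :
    ∑ s, (if s * t * x / ((1 - s) * (1 - t)) = 1 then A s else 0) =
      A ((1 - t) / (1 - t + t * x)) := by
  set d := 1 - t + t * x
  have unique (s : F) (hs : s * t * x / ((1 - s) * (1 - t)) = 1) : s = (1 - t) / d := by
    have hne : (1 - s) * (1 - t) ≠ 0 := by rintro h; simp [h] at hs
    rw [div_eq_one_iff_eq hne] at hs
    have hsd : s * d = 1 - t := by linear_combination hs
    have hd : d ≠ 0 := by
      rintro h
      rw [h, mul_zero] at hsd
      exact right_ne_zero_of_mul hne hsd.symm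
    exact eq_div_of_mul_eq hd hsd
  rw [sum_eq_single ((1 - t) / d) (fun s _ hs ↦ if_neg (mt (unique s) hs)) (by simp),
    ite_eq_left_iff]
  -- where the condition fails at the only candidate, the candidate is `0` and `A` vanishes there
  intro hcond
  by_contra hA
  have hs0 : (1 - t) / d ≠ 0 := fun h ↦ hA (by rw [h, MulChar.map_zero])
  obtain ⟨h1t, hd⟩ := div_ne_zero_iff.mp hs0
  have h1s : 1 - (1 - t) / d = t * x / d := by field_simp; ring
  apply hcond
  rw [h1s]
  field_simp

end MulChar

theorem Finset.sum_eq_sum_erase_one_div_sub_one {F M : Type*} [Field F] [Fintype F]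
    [DecidableEq F] [AddCommMonoid M] (f : F → M) (h : f 1 = 0) :
    ∑ t, f t = ∑ y ∈ univ.erase 1, f (y / (y - 1)) := by
  have mem (y : F) (hy : y ∈ univ.erase 1) : y / (y - 1) ∈ univ.erase 1 := by
    have hy1 : y - 1 ≠ 0 := sub_ne_zero.mpr (ne_of_mem_erase hy)
    refine mem_erase.mpr ⟨fun h ↦ ?_, mem_univ _⟩
    rw [div_eq_one_iff_eq hy1] at h
    exact one_ne_zero (sub_eq_self.mp h.symm)
  have invol (y : F) (hy : y ∈ univ.erase 1) : y / (y - 1) / (y / (y - 1) - 1) = y := by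
    have hy1 : y - 1 ≠ 0 := sub_ne_zero.mpr (ne_of_mem_erase hy)
    field_simp
    ring
  rw [← sum_erase univ h]
  exact sum_nbij' _ _ mem mem invol invol fun y hy ↦ by rw [invol y hy]

section Kernel

variable {F R : Type*} [Field F] [Field R]

noncomputable def hypF21Kernel (A B C : MulChar F R) (x t : F) : R :=
  B t * C⁻¹ (1 - t) * A ((1 - t) / (1 - t + t * x))

theorem hypF21Kernel_mul_mul_inv_one_sub (A B C : MulChar F R) (x y : F) :
    hypF21Kernel A B (A * B * C⁻¹) (1 - x) y =
      B (y / (1 - y)) * C (1 - y) * A (1 - y * x)⁻¹ := by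
  rw [hypF21Kernel]
  rcases eq_or_ne (1 - y) 0 with h | h
  · simp [h, MulChar.map_zero]
  have hA : A (1 - y)⁻¹ * A (1 - y) = 1 := by rw [← map_mul, inv_mul_cancel₀ h, map_one]
  rw [show 1 - y + y * (1 - x) = 1 - y * x by ring, div_eq_mul_inv, div_eq_mul_inv]
  simp only [MulChar.inv_apply', MulChar.mul_apply, map_mul, inv_inv]
  linear_combination B y * B (1 - y)⁻¹ * C (1 - y) * A (1 - y * x)⁻¹ * hA

theorem sum_hypF21Kernel [Fintype F] (A B C : MulChar F R) (x : F) :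
    ∑ t, hypF21Kernel A B C x t =
      B (-1) * ∑ y, B (y / (1 - y)) * C (1 - y) * A (1 - y * x)⁻¹ := by
  classical
  simp only [hypF21Kernel]
  rw [sum_eq_sum_erase_one_div_sub_one _ (by simp [MulChar.map_zero]),
    ← sum_erase univ (a := 1) (by simp [MulChar.map_zero]), mul_sum]
  refine sum_congr rfl fun y hy ↦ ?_
  have hy1 : y - 1 ≠ 0 := sub_ne_zero.mpr (ne_of_mem_erase hy)
  have h1y : 1 - y ≠ 0 := by rwa [← neg_sub, neg_ne_zero]
  have e1 : y / (y - 1) = -1 * (y / (1 - y)) := by field_simp; ring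
  have e2 : 1 - y / (y - 1) = (1 - y)⁻¹ := by field_simp; ring
  have e3 : 1 - y / (y - 1) + y / (y - 1) * x = (1 - y * x) * (1 - y)⁻¹ := by field_simp; ring
  rw [e3, e2, div_mul_cancel_right₀ (inv_ne_zero h1y), e1, map_mul, MulChar.inv_apply', inv_inv]
  ring

end Kernel

section Hypergeometric

variable {F : Type} [Field F] [Fintype F]

theorem binomC_mul_binomC_mul_apply (A B C χ : MulChar F ℂ) (x : F) :
    binomC F (A * χ) χ * binomC F (B * χ) (C * χ) * χ x =
      C (-1) / (Fintype.card F : ℂ) ^ 2 *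
        ∑ t, ∑ s, A s * B t * C⁻¹ (1 - t) * χ (s * t * x / ((1 - s) * (1 - t))) := by
  simp only [binomC, jacobiSum, mul_sum, sum_mul]
  refine sum_congr rfl fun t _ ↦ sum_congr rfl fun s _ ↦ ?_
  simp only [MulChar.mul_apply, MulChar.inv_apply', div_eq_mul_inv, mul_inv, map_mul]
  linear_combination (C (-1) * (A s * B t * C (1 - t)⁻¹ * χ s * χ t * χ x * χ (1 - s)⁻¹ *
    χ (1 - t)⁻¹) / (Fintype.card F : ℂ) ^ 2) * χ.apply_neg_one_mul_apply_neg_one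

theorem hypF21_eq_sum_sum [DecidableEq F] {T : MulChar F ℂ}
    (hT : ∀ χ : MulChar F ℂ, ∃ n : ℕ, χ = T ^ n) (A B C : MulChar F ℂ) (x : F) :
    hypF21 F T A B C x = C (-1) / (Fintype.card F : ℂ) * ∑ t, B t * C⁻¹ (1 - t) *
      ∑ s, if s * t * x / ((1 - s) * (1 - t)) = 1 then A s else 0 := by
  have hq : (Fintype.card F : ℂ) ≠ 0 := Nat.cast_ne_zero.mpr Fintype.card_ne_zero
  have hq1 : (Fintype.card F : ℂ) - 1 ≠ 0 :=
    sub_ne_zero.mpr (Nat.cast_ne_one.mpr Fintype.one_lt_card.ne')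
  simp only [hypF21, binomC_mul_binomC_mul_apply, ← mul_sum]
  rw [sum_comm]
  simp only [sum_comm (s := range _), ← mul_sum, MulChar.sum_range_pow_apply hT]
  have hterm (s t : F) (c : Prop) [Decidable c] :
      A s * B t * C⁻¹ (1 - t) * (if c then (Fintype.card F : ℂ) - 1 else 0) =
        ((Fintype.card F : ℂ) - 1) * (B t * C⁻¹ (1 - t) * if c then A s else 0) := by
    split_ifs <;> ring
  simp only [hterm, ← mul_sum]
  generalize (∑ t : F, _ : ℂ) = S
  field_simp

theorem hypF21_eq_sum_hypF21Kernel {T : MulChar F ℂ}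
    (hT : ∀ χ : MulChar F ℂ, ∃ n : ℕ, χ = T ^ n) (A B C : MulChar F ℂ) {x : F} (hx : x ≠ 0) :
    hypF21 F T A B C x =
      C (-1) / (Fintype.card F : ℂ) * ∑ t, hypF21Kernel A B C x t := by
  classical
  rw [hypF21_eq_sum_sum hT]
  congr 1
  refine sum_congr rfl fun t _ ↦ ?_
  rcases eq_or_ne t 0 with rfl | ht
  · simp [hypF21Kernel, MulChar.map_zero]
  rw [MulChar.sum_ite_div_eq_one A ht hx, hypF21Kernel]

end Hypergeometric

theorem stmt_11 (F : Type) [Field F] [Fintype F]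
    (T : MulChar F ℂ) (hT : ∀ χ : MulChar F ℂ, ∃ n : ℕ, χ = T ^ n)
    (A B C : MulChar F ℂ) (x : F) (hx0 : x ≠ 0) (hx1 : x ≠ 1) :
    hypF21 F T A B C x = A (-1) * hypF21 F T A B (A * B * C⁻¹) (1 - x) := by
  rw [hypF21_eq_sum_hypF21Kernel hT A B C hx0,
    hypF21_eq_sum_hypF21Kernel hT _ _ _ (sub_ne_zero.mpr hx1.symm)]
  simp only [hypF21Kernel_mul_mul_inv_one_sub]
  rw [sum_hypF21Kernel, MulChar.mul_apply, MulChar.mul_apply, MulChar.inv_apply_neg_one]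
  linear_combination (-B (-1) * C (-1) / (Fintype.card F : ℂ) *
    ∑ y, B (y / (1 - y)) * C (1 - y) * A (1 - y * x)⁻¹) * A.apply_neg_one_mul_apply_neg_one
end

section
/- For multiplicative characters A, B, C of F_q and x ∈ F_q^*, Greene's hypergeometric series satisfies ₂F₁(A,B;C|x)_q = (ABC)(-1) · Ā(x) · ₂F₁(A, A·C̄; A·B̄ | 1/x)_q. -/
/-
Since `T` generates the character group, the series is a sum over all characters `χ`.
Substituting `χ ↦ (A χ)⁻¹` and applying `binom(X, Y) = (XY)(-1) · binom(Y⁻¹, X⁻¹)` to both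
binomial factors matches the two series term by term; the leftover signs cancel because
`χ(-1)² = 1`.
-/

open Finset

theorem sum_range_card_pow_of_forall_eq_pow {G M : Type*} [Group G] [Fintype G]
    [AddCommMonoid M] {g : G} (hg : ∀ x : G, ∃ n : ℕ, x = g ^ n) (f : G → M) :
    ∑ m ∈ range (Fintype.card G), f (g ^ m) = ∑ x, f x := by
  classical
  have hzpow : ∀ x : G, x ∈ Subgroup.zpowers g := fun x ↦ by
    obtain ⟨n, rfl⟩ := hg x
    exact Subgroup.npow_mem_zpowers g n
  have horder : orderOf g = Fintype.card G := by
    rw [orderOf_eq_card_of_forall_mem_zpowers hzpow, Nat.card_eq_fintype_card]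
  rw [← Nat.card_eq_fintype_card, ← Finset.sum_image, IsCyclic.image_range_card hzpow]
  rw [Nat.card_eq_fintype_card, ← horder, ← Nat.Iio_eq_range]
  simpa using pow_injOn_Iio_orderOf (x := g)

theorem MulChar.card_eq_card_sub_one (F R : Type*) [Field F] [Fintype F] [CommRing R]
    [IsDomain R] [HasEnoughRootsOfUnity R (Monoid.exponent Fˣ)] :
    Nat.card (MulChar F R) = Fintype.card F - 1 := by
  rw [MulChar.card_eq_card_units_of_hasEnoughRootsOfUnity, Nat.card_units,
    Nat.card_eq_fintype_card]

theorem MulChar.apply_neg_one_mul_self {F R : Type*} [CommRing F] [CommRing R]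
    (χ : MulChar F R) :
    χ (-1) * χ (-1) = 1 := by
  rw [← map_mul, neg_mul_neg, one_mul, map_one]

theorem binomC_eq_mul_binomC_inv_inv (F : Type) [Field F] [Fintype F] (X Y : MulChar F ℂ) :
    binomC F X Y = (X * Y) (-1) * binomC F Y⁻¹ X⁻¹ := by
  unfold binomC
  rw [inv_inv, jacobiSum_comm, MulChar.mul_apply, MulChar.inv_apply', inv_neg, inv_one]
  linear_combination
    (-(Y (-1) * jacobiSum Y⁻¹ X / (Fintype.card F : ℂ))) * X.apply_neg_one_mul_self

noncomputable def hypF21Term (F : Type) [Field F] [Fintype F] (A B C χ : MulChar F ℂ) (x : F) :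
    ℂ :=
  binomC F (A * χ) χ * binomC F (B * χ) (C * χ) * χ x

theorem hypF21_eq_sum_univ (F : Type) [Field F] [Fintype F] [Fintype (MulChar F ℂ)]
    (T : MulChar F ℂ) (hT : ∀ χ : MulChar F ℂ, ∃ n : ℕ, χ = T ^ n) (A B C : MulChar F ℂ)
    (x : F) :
    hypF21 F T A B C x =
      (Fintype.card F : ℂ) / ((Fintype.card F : ℂ) - 1) * ∑ χ, hypF21Term F A B C χ x := by
  rw [hypF21, ← MulChar.card_eq_card_sub_one F ℂ, Nat.card_eq_fintype_card]
  exact congrArg _ (sum_range_card_pow_of_forall_eq_pow hT (hypF21Term F A B C · x))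

theorem hypF21Term_eq_mul_hypF21Term_inv_mul (F : Type) [Field F] [Fintype F]
    (A B C χ : MulChar F ℂ) {x : F} (hx : x ≠ 0) :
    hypF21Term F A B C χ x =
      (A * B * C) (-1) * A⁻¹ x * hypF21Term F A (A * C⁻¹) (A * B⁻¹) (A * χ)⁻¹ x⁻¹ := by
  have e1 : A * (A * χ)⁻¹ = χ⁻¹ := by rw [mul_inv, mul_inv_cancel_left]
  have e2 : A * C⁻¹ * (A * χ)⁻¹ = (C * χ)⁻¹ := by
    rw [mul_inv, mul_inv, mul_mul_mul_comm, mul_inv_cancel, one_mul]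
  have e3 : A * B⁻¹ * (A * χ)⁻¹ = (B * χ)⁻¹ := by
    rw [mul_inv, mul_inv, mul_mul_mul_comm, mul_inv_cancel, one_mul]
  rw [hypF21Term, hypF21Term, e1, e2, e3, binomC_eq_mul_binomC_inv_inv F (A * χ),
    binomC_eq_mul_binomC_inv_inv F (B * χ)]
  simp only [MulChar.mul_apply, MulChar.inv_apply', inv_inv]
  have hAx : A x⁻¹ * A x = 1 := by rw [← map_mul, inv_mul_cancel₀ hx, map_one]
  linear_combination -(A (-1) * B (-1) * C (-1) * binomC F χ⁻¹ (A * χ)⁻¹ *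
    binomC F (C * χ)⁻¹ (B * χ)⁻¹ * χ x) *
    (hAx - (χ (-1) * χ (-1) + 1) * χ.apply_neg_one_mul_self)

theorem stmt_12 (F : Type) [Field F] [Fintype F]
    (T : MulChar F ℂ) (hT : ∀ χ : MulChar F ℂ, ∃ n : ℕ, χ = T ^ n)
    (A B C : MulChar F ℂ) (x : F) (hx : x ≠ 0) :
    hypF21 F T A B C x =
      (A * B * C) (-1) * A⁻¹ x * hypF21 F T A (A * C⁻¹) (A * B⁻¹) x⁻¹ := by
  let _ : Fintype (MulChar F ℂ) := .ofFinite _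
  rw [hypF21_eq_sum_univ F T hT, hypF21_eq_sum_univ F T hT, mul_left_comm]
  congr 1
  rw [Finset.mul_sum]
  exact Fintype.sum_equiv ((Equiv.mulLeft A).trans (Equiv.inv _)) (hypF21Term F A B C · x)
    (fun ψ ↦ (A * B * C) (-1) * A⁻¹ x * hypF21Term F A (A * C⁻¹) (A * B⁻¹) ψ x⁻¹)
    fun χ ↦ hypF21Term_eq_mul_hypF21Term_inv_mul F A B C χ hx
end

section
/- Let q be an odd prime power, b ∈ F_q^*, T a generator of the character group of F_q^*, and θ the canonical additive character. Then ∑_{y,z ∈ F_q^*} θ(zb) θ(−zy²) = 1 + q · T^{(q-1)/2}(b). -/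
open Finset

/-!
With `ψ x = ζ_p ^ tr x` the canonical primitive additive character, the summand is
`ψ (z (b - y²))`. Summing over `z ∈ F_q^*` gives `q·[y² = b] - 1`, so the double sum is
`q · #{y | y² = b} - (q - 1) = 1 + q η(b)` with `η` the quadratic character. Finally
`η = T^{(q-1)/2}`: by Euler's criterion `η(b) = b^{(q-1)/2} ∈ {0, ±1}`, and `T(-1) = -1`
because some character, hence some power of `T`, is nontrivial on `-1`.
-/

theorem Fintype.sum_units_eq_sum_sub {K M : Type*} [GroupWithZero K] [Fintype K] [DecidableEq K]
    [AddCommGroup M] (f : K → M) : ∑ z : Kˣ, f z = ∑ x, f x - f 0 := by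
  rw [eq_sub_iff_add_eq, ← sum_erase_add _ f (mem_univ 0),
    sum_subtype (p := (· ≠ 0)) _ (fun x => by simp) f]
  exact congrArg (· + f 0) (Fintype.sum_equiv unitsEquivNeZero _ _ fun _ => rfl)

theorem AddChar.sum_units_mul_eq {F R : Type*} [Field F] [Fintype F] [DecidableEq F]
    [CommRing R] [IsDomain R] {ψ : AddChar F R} (hψ : ψ.IsPrimitive) (c : F) :
    ∑ z : Fˣ, ψ (z * c) = (if c = 0 then (Fintype.card F : R) else 0) - 1 := by
  rw [Fintype.sum_units_eq_sum_sub (fun z => ψ (z * c)), AddChar.sum_mulShift c hψ, zero_mul,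
    AddChar.map_zero_eq_one, Nat.cast_ite, Nat.cast_zero]

theorem ringChar_eq_of_algebra_zmod (p : ℕ) [Fact p.Prime] (F : Type*) [Field F]
    [Algebra (ZMod p) F] : ringChar F = p :=
  have := charP_of_injective_algebraMap (algebraMap (ZMod p) F).injective p
  ringChar.eq F p

section Theta

variable (p : ℕ) [Fact p.Prime] (F : Type) [Field F] [Algebra (ZMod p) F]

noncomputable def thetaChar : AddChar F ℂ :=
  (AddChar.zmodChar p (Complex.isPrimitiveRoot_exp p (NeZero.ne p)).pow_eq_one).compAddMonoidHom
    (Algebra.trace (ZMod p) F).toAddMonoidHom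

theorem thetaChar_apply [Fintype F] (α : F) : thetaChar p F α = theta p F α := by
  change Complex.exp _ ^ (Algebra.trace (ZMod p) F α).val = _
  rw [theta, ← Complex.exp_nat_mul]
  congr 1
  ring

theorem thetaChar_isPrimitive [Finite F] : (thetaChar p F).IsPrimitive := by
  refine AddChar.IsPrimitive.of_ne_one (AddChar.ne_one_iff.mpr ?_)
  obtain ⟨x, hx⟩ := DFunLike.ne_iff.mp (Algebra.trace_ne_zero (ZMod p) F)
  refine ⟨x, fun h => hx ?_⟩
  have hdvd := ((Complex.isPrimitiveRoot_exp p (NeZero.ne p)).pow_eq_one_iff_dvd _).mp h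
  rw [LinearMap.zero_apply, ← ZMod.val_eq_zero]
  exact Nat.eq_zero_of_dvd_of_lt hdvd (ZMod.val_lt _)

end Theta

section Generator

variable {F : Type*} [Field F] [Fintype F] {T : MulChar F ℂ}

theorem MulChar.apply_neg_one_of_forall_eq_pow_s15 (hF : ringChar F ≠ 2)
    (hT : ∀ χ : MulChar F ℂ, ∃ n : ℕ, χ = T ^ n) : T (-1) = -1 := by
  have : NeZero ((Monoid.exponent Fˣ : ℕ) : ℂ) :=
    ⟨by exact_mod_cast Monoid.exponent_ne_zero_of_finite⟩
  obtain ⟨χ, hχ⟩ := MulChar.exists_apply_ne_one_of_hasEnoughRootsOfUnity F ℂ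
    (Ring.neg_one_ne_one_of_char_ne_two hF)
  obtain ⟨n, rfl⟩ := hT χ
  have hne : T (-1) ≠ 1 := fun h => hχ (by simpa [h] using MulChar.pow_apply_coe T n (-1))
  have hsq : T (-1) ^ 2 = 1 := by rw [← map_pow, neg_one_sq, map_one]
  exact (sq_eq_one_iff.mp hsq).resolve_left hne

theorem MulChar.pow_card_sub_one_div_two_apply [DecidableEq F] (hF : ringChar F ≠ 2)
    (hT : ∀ χ : MulChar F ℂ, ∃ n : ℕ, χ = T ^ n) (a : F) :
    (T ^ ((Fintype.card F - 1) / 2)) a = quadraticChar F a := by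
  have hk : (Fintype.card F - 1) / 2 = Fintype.card F / 2 := by
    have := FiniteField.odd_card_of_char_ne_two hF
    omega
  have hk0 : Fintype.card F / 2 ≠ 0 := (Nat.div_pos Fintype.one_lt_card two_pos).ne'
  rw [hk, MulChar.pow_apply' T hk0, ← map_pow, ← quadraticChar_eq_pow_of_char_ne_two' hF]
  rcases quadraticChar_isQuadratic F a with h | h | h <;>
    simp [h, apply_neg_one_of_forall_eq_pow_s15 hF hT]

end Generator

open scoped Classical in
theorem stmt_15_general (p : ℕ) [Fact p.Prime] (hp : p ≠ 2)
    (F : Type) [Field F] [Fintype F] [Algebra (ZMod p) F]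
    (b : F) (hb : b ≠ 0)
    (T : MulChar F ℂ) (hT : ∀ χ : MulChar F ℂ, ∃ n : ℕ, χ = T ^ n) :
    ∑ z : Fˣ, ∑ y : Fˣ, theta p F ((z : F) * b) * theta p F (-((z : F) * (y : F) ^ 2)) =
      1 + (Fintype.card F : ℂ) * (T ^ ((Fintype.card F - 1) / 2)) b := by
  have hF : ringChar F ≠ 2 := ringChar_eq_of_algebra_zmod p F ▸ hp
  have hsqrts : (#{x : F | x ^ 2 = b} : ℂ) = quadraticChar F b + 1 := by
    have := quadraticChar_card_sqrts hF b
    rw [Set.toFinset_ofPred] at this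
    exact_mod_cast this
  let δ (x : F) : ℂ := (if x ^ 2 = b then (Fintype.card F : ℂ) else 0) - 1
  calc _ = ∑ y : Fˣ, ∑ z : Fˣ, thetaChar p F (z * (b - y ^ 2)) := by
        rw [sum_comm]
        refine sum_congr rfl fun y _ => sum_congr rfl fun z _ => ?_
        rw [← thetaChar_apply, ← thetaChar_apply, ← AddChar.map_add_eq_mul]
        ring_nf
    _ = ∑ y : Fˣ, δ y := by
        simp_rw [AddChar.sum_units_mul_eq (thetaChar_isPrimitive p F), sub_eq_zero,
          eq_comm (a := b)]
        rfl
    _ = ∑ x : F, δ x + 1 := by simp [Fintype.sum_units_eq_sum_sub δ, δ, hb.symm]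
    _ = 1 + Fintype.card F * quadraticChar F b := by
        simp only [δ, sum_sub_distrib, ← sum_filter, sum_const, nsmul_eq_mul, card_univ, mul_one,
          hsqrts]
        ring
    _ = _ := by rw [MulChar.pow_card_sub_one_div_two_apply hF hT]

open scoped Classical in
theorem stmt_15 (p e : ℕ) [Fact p.Prime] (hp : p ≠ 2) (he : 0 < e)
    (F : Type) [Field F] [Fintype F] [Algebra (ZMod p) F]
    (hq : Fintype.card F = p ^ e)
    (b : F) (hb : b ≠ 0)
    (T : MulChar F ℂ) (hT : ∀ χ : MulChar F ℂ, ∃ n : ℕ, χ = T ^ n) :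
    ∑ z : Fˣ, ∑ y : Fˣ, theta p F ((z : F) * b) * theta p F (-((z : F) * (y : F) ^ 2)) =
      1 + (Fintype.card F : ℂ) * (T ^ ((Fintype.card F - 1) / 2)) b :=
  stmt_15_general p hp F b hb T hT
end
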